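/- arXiv:2505.08171 — 4 statements merged into one kernel-verified Lean document; each statement's English description precedes it below -/
import Mathlib

section
/- Let a < b be real numbers and let f : (a,b) → ℝ be a differentiable function that is integrable on (a,b) and satisfies ∫_a^b (y−a)(b−y)|f′(y)|² dy < ∞. Then ∫_a^b |f(y) − (1/(b−a))∫_a^b f(z) dz|² dy ≤ (1/2) ∫_a^b (y−a)(b−y)|f′(y)|² dy. -/
/-!
With `m` the mean of `f`, `∫ (f - m)² = (2 (b - a))⁻¹ ∫∫ (f x - f y)² dx dy`. For `y < x`, the
fundamental theorem of calculus and Cauchy–Schwarz give `(f x - f y)² ≤ (x - y) ∫_y^x f'²`.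
Integrating over `x, y` and exchanging the order of integration, `f'(t)²` receives the weight
`2 ∫∫_{y < t < x} (x - y) dx dy = (b - a) (t - a) (b - t)`, which is the constant `1/2`.
-/

open MeasureTheory Set
open scoped ENNReal

section FiniteMeasure

variable {α : Type*} [MeasurableSpace α] {μ : Measure α} [IsFiniteMeasure μ] {g : α → ℝ}

lemma integral_const_sub_sq (hg : MemLp g 2 μ) (c : ℝ) :
    ∫ y, (c - g y) ^ 2 ∂μ = μ.real univ * c ^ 2 - 2 * c * ∫ y, g y ∂μ + ∫ y, g y ^ 2 ∂μ := by
  have hlin : Integrable (fun y => c ^ 2 - 2 * c * g y) μ :=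
    (integrable_const _).sub ((hg.integrable one_le_two).const_mul _)
  simp_rw [sub_sq]
  rw [integral_add hlin hg.integrable_sq,
    integral_sub (integrable_const _) ((hg.integrable one_le_two).const_mul _), integral_const,
    integral_const_mul, smul_eq_mul]

lemma sq_integral_le_measureReal_mul_integral_sq (hg : MemLp g 2 μ) :
    (∫ y, g y ∂μ) ^ 2 ≤ μ.real univ * ∫ y, g y ^ 2 ∂μ := by
  have hdiscr := discrim_le_zero (a := μ.real univ) (b := -2 * ∫ y, g y ∂μ)
    (c := ∫ y, g y ^ 2 ∂μ) fun c => by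
      have := integral_const_sub_sq hg c ▸ integral_nonneg fun y => sq_nonneg (c - g y)
      linarith
  rw [discrim] at hdiscr
  linarith

lemma lintegral_lintegral_ofReal_sub_sq (hg : MemLp g 2 μ) :
    ∫⁻ x, ∫⁻ y, ENNReal.ofReal ((g x - g y) ^ 2) ∂μ ∂μ
      = ENNReal.ofReal (2 * (μ.real univ * ∫ y, g y ^ 2 ∂μ - (∫ y, g y ∂μ) ^ 2)) := by
  have hg₁ : Integrable g μ := hg.integrable one_le_two
  have hquad : Integrable (fun x => μ.real univ * g x ^ 2 - 2 * g x * ∫ y, g y ∂μ) μ :=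
    (hg.integrable_sq.const_mul _).sub ((hg₁.const_mul 2).mul_const _)
  have hinner (x : α) : ∫⁻ y, ENNReal.ofReal ((g x - g y) ^ 2) ∂μ
      = ENNReal.ofReal (μ.real univ * g x ^ 2 - 2 * g x * ∫ y, g y ∂μ + ∫ y, g y ^ 2 ∂μ) := by
    rw [← integral_const_sub_sq hg, ofReal_integral_eq_lintegral_ofReal]
    · exact (memLp_const (g x)).sub hg |>.integrable_sq
    · exact ae_of_all _ fun y => sq_nonneg _
  have hinner_nonneg (x : α) :
      0 ≤ μ.real univ * g x ^ 2 - 2 * g x * (∫ y, g y ∂μ) + ∫ y, g y ^ 2 ∂μ :=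
    integral_const_sub_sq hg (g x) ▸ integral_nonneg fun y => sq_nonneg (g x - g y)
  simp_rw [hinner]
  rw [← ofReal_integral_eq_lintegral_ofReal (f := fun x => μ.real univ * g x ^ 2
      - 2 * g x * (∫ y, g y ∂μ) + ∫ y, g y ^ 2 ∂μ) (hquad.add (integrable_const _))
    (ae_of_all _ hinner_nonneg), integral_add hquad (integrable_const _),
    integral_sub (hg.integrable_sq.const_mul _) ((hg₁.const_mul 2).mul_const _),
    integral_const, integral_const_mul, integral_mul_const, integral_const_mul, smul_eq_mul]
  congr 1
  ring

end FiniteMeasure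

lemma ofReal_sub_sq_le_mul_lintegral_sq {f f' : ℝ → ℝ} {x y : ℝ} (hyx : y ≤ x)
    (hf : ∀ t ∈ Icc y x, HasDerivAt f (f' t) t) :
    ENNReal.ofReal ((f x - f y) ^ 2)
      ≤ ENNReal.ofReal (x - y) * ∫⁻ t in Ioo y x, ENNReal.ofReal (f' t ^ 2) := by
  have hmeas : AEStronglyMeasurable f' (volume.restrict (Ioo y x)) :=
    (measurable_deriv f).aestronglyMeasurable.congr <| ae_restrict_of_forall_mem measurableSet_Ioo
      fun t ht => (hf t (Ioo_subset_Icc_self ht)).deriv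
  rcases hyx.eq_or_lt with rfl | hlt
  · simp
  by_cases hfin : ∫⁻ t in Ioo y x, ENNReal.ofReal (f' t ^ 2) = ⊤
  · rw [hfin, ENNReal.mul_top (ENNReal.ofReal_pos.2 (sub_pos.2 hlt)).ne']
    exact le_top
  have hsq : IntegrableOn (fun t => f' t ^ 2) (Ioo y x) :=
    (lintegral_ofReal_ne_top_iff_integrable (hmeas.pow 2) (ae_of_all _ fun _ => sq_nonneg _)).1 hfin
  have hL2 : MemLp f' 2 (volume.restrict (Ioo y x)) := (memLp_two_iff_integrable_sq hmeas).2 hsq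
  have hftc : f x - f y = ∫ t in Ioo y x, f' t := by
    rw [← integral_Ioc_eq_integral_Ioo, ← intervalIntegral.integral_of_le hyx]
    refine (intervalIntegral.integral_eq_sub_of_hasDerivAt (fun t ht => hf t ?_) ?_).symm
    · rwa [uIcc_of_le hyx] at ht
    · exact (intervalIntegrable_iff_integrableOn_Ioo_of_le hyx).2 (hL2.integrable one_le_two)
  have hcs := sq_integral_le_measureReal_mul_integral_sq hL2
  rw [measureReal_restrict_apply_univ, Real.volume_real_Ioo_of_le hyx, ← hftc] at hcs
  rw [← ofReal_integral_eq_lintegral_ofReal hsq (ae_of_all _ fun _ => sq_nonneg _),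
    ← ENNReal.ofReal_mul (sub_nonneg.2 hyx)]
  exact ENNReal.ofReal_le_ofReal hcs

lemma lintegral_lintegral_lintegral_swap {α β γ : Type*} [MeasurableSpace α] [MeasurableSpace β]
    [MeasurableSpace γ] {μ : Measure α} {ν : Measure β} {ρ : Measure γ} [SFinite μ] [SFinite ν]
    [SFinite ρ] {F : α → β → γ → ℝ≥0∞} (hF : Measurable fun p : α × β × γ => F p.1 p.2.1 p.2.2) :
    ∫⁻ x, ∫⁻ y, ∫⁻ z, F x y z ∂ρ ∂ν ∂μ = ∫⁻ z, ∫⁻ x, ∫⁻ y, F x y z ∂ν ∂μ ∂ρ := by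
  calc ∫⁻ x, ∫⁻ y, ∫⁻ z, F x y z ∂ρ ∂ν ∂μ = ∫⁻ x, ∫⁻ z, ∫⁻ y, F x y z ∂ν ∂ρ ∂μ :=
        lintegral_congr fun x => lintegral_lintegral_swap
          (hF.comp (measurable_const.prodMk measurable_id)).aemeasurable
    _ = ∫⁻ z, ∫⁻ x, ∫⁻ y, F x y z ∂ν ∂μ ∂ρ := by
        refine lintegral_lintegral_swap (Measurable.aemeasurable ?_)
        exact Measurable.lintegral_prod_right' (f := fun q : (α × γ) × β => F q.1.1 q.2 q.1.2)
          (hF.comp (measurable_fst.fst.prodMk (measurable_snd.prodMk measurable_fst.snd)))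

lemma lintegral_Ioo_ofReal_sub_left {c d : ℝ} (hcd : c ≤ d) :
    ∫⁻ x in Ioo c d, ENNReal.ofReal (x - c) = ENNReal.ofReal ((d - c) ^ 2 / 2) := by
  rw [← ofReal_integral_eq_lintegral_ofReal, ← integral_Ioc_eq_integral_Ioo,
    ← intervalIntegral.integral_of_le hcd]
  · rw [intervalIntegral.integral_comp_sub_right (fun x => x)]
    simp [integral_id]
  · exact (continuous_id.sub continuous_const).integrableOn_Icc.mono_set Ioo_subset_Icc_self
  · exact ae_restrict_of_forall_mem measurableSet_Ioo fun x hx => sub_nonneg.2 hx.1.le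

lemma lintegral_Ioo_ofReal_sub_right {c d : ℝ} (hcd : c ≤ d) :
    ∫⁻ x in Ioo c d, ENNReal.ofReal (d - x) = ENNReal.ofReal ((d - c) ^ 2 / 2) := by
  rw [← ofReal_integral_eq_lintegral_ofReal, ← integral_Ioc_eq_integral_Ioo,
    ← intervalIntegral.integral_of_le hcd]
  · rw [intervalIntegral.integral_comp_sub_left (fun x => x)]
    simp [integral_id]
  · exact (continuous_const.sub continuous_id).integrableOn_Icc.mono_set Ioo_subset_Icc_self
  · exact ae_restrict_of_forall_mem measurableSet_Ioo fun x hx => sub_nonneg.2 hx.2.le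

noncomputable def segmentKernel (x y t : ℝ) : ℝ≥0∞ :=
  (Ioo y x).indicator (fun _ => ENNReal.ofReal (x - y)) t

lemma measurable_segmentKernel :
    Measurable fun p : ℝ × ℝ × ℝ => segmentKernel p.1 p.2.1 p.2.2 := by
  unfold segmentKernel
  simp only [indicator, mem_Ioo]
  refine Measurable.ite ?_ (by fun_prop) measurable_const
  exact (measurableSet_lt measurable_snd.fst measurable_snd.snd).inter
    (measurableSet_lt measurable_snd.snd measurable_fst)

lemma segmentKernel_eq_indicator (x y t : ℝ) :
    segmentKernel x y t = (Ioi t).indicator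
      (fun x => (Iio t).indicator (fun y => ENNReal.ofReal (x - t) + ENNReal.ofReal (t - y)) y)
      x := by
  by_cases hx : t < x <;> by_cases hy : y < t <;>
    simp only [segmentKernel, indicator, mem_Ioo, mem_Ioi, mem_Iio, hx, hy, and_true,
      and_false, if_false, if_true]
  rw [← ENNReal.ofReal_add (sub_nonneg.2 hx.le) (sub_nonneg.2 hy.le)]
  ring_nf

lemma lintegral_lintegral_segmentKernel {a b t : ℝ} (ht : t ∈ Ioo a b) :
    ∫⁻ x in Ioo a b, ∫⁻ y in Ioo a b, segmentKernel x y t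
      = ENNReal.ofReal ((b - a) * (t - a) * (b - t) / 2) := by
  obtain ⟨hat, htb⟩ := ht
  have hinner (x : ℝ) : ∫⁻ y in Ioo a b, segmentKernel x y t = (Ioi t).indicator
      (fun x => ENNReal.ofReal (x - t) * ENNReal.ofReal (t - a) + ENNReal.ofReal ((t - a) ^ 2 / 2))
      x := by
    by_cases hx : t < x
    · simp only [segmentKernel_eq_indicator, indicator_of_mem (mem_Ioi.2 hx)]
      rw [lintegral_indicator measurableSet_Iio, Measure.restrict_restrict measurableSet_Iio,
        Iio_inter_Ioo, min_eq_left htb.le, lintegral_add_left measurable_const,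
        setLIntegral_const, Real.volume_Ioo, lintegral_Ioo_ofReal_sub_right hat.le]
    · simp [segmentKernel_eq_indicator, hx]
  rw [lintegral_congr hinner, lintegral_indicator measurableSet_Ioi,
    Measure.restrict_restrict measurableSet_Ioi, Ioi_inter_Ioo, max_eq_left hat.le,
    lintegral_add_right _ measurable_const, lintegral_mul_const' _ _ ENNReal.ofReal_ne_top,
    setLIntegral_const, Real.volume_Ioo, lintegral_Ioo_ofReal_sub_left htb.le,
    ← ENNReal.ofReal_mul (by positivity), ← ENNReal.ofReal_mul (by positivity),
    ← ENNReal.ofReal_add (by positivity) (by positivity)]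
  congr 1
  ring

lemma lintegral_lintegral_segmentKernel_add_swap {a b t : ℝ} (ht : t ∈ Ioo a b) :
    ∫⁻ x in Ioo a b, ∫⁻ y in Ioo a b, (segmentKernel x y t + segmentKernel y x t)
      = ENNReal.ofReal ((b - a) * (t - a) * (b - t)) := by
  have hhalf : 0 ≤ (b - a) * (t - a) * (b - t) / 2 := by
    obtain ⟨hat, htb⟩ := ht
    have hab : 0 ≤ b - a := by linarith
    exact div_nonneg (mul_nonneg (mul_nonneg hab (sub_nonneg.2 hat.le)) (sub_nonneg.2 htb.le))
      zero_le_two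
  have hK : Measurable fun p : ℝ × ℝ => segmentKernel p.1 p.2 t :=
    measurable_segmentKernel.comp (measurable_fst.prodMk (measurable_snd.prodMk measurable_const))
  have hK' : Measurable fun p : ℝ × ℝ => segmentKernel p.2 p.1 t :=
    hK.comp measurable_swap
  have hKy (x : ℝ) : Measurable fun y => segmentKernel x y t :=
    hK.comp (measurable_const.prodMk measurable_id)
  simp only [lintegral_add_left (hKy _)]
  rw [lintegral_add_left hK.lintegral_prod_right',
    lintegral_lintegral_swap (f := fun x y => segmentKernel y x t) hK'.aemeasurable,
    lintegral_lintegral_segmentKernel ht, ← ENNReal.ofReal_add hhalf hhalf]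
  congr 1
  ring

lemma ofReal_sub_sq_le_lintegral_segmentKernel {f f' : ℝ → ℝ} {a b x y : ℝ}
    (hf : ∀ t ∈ Ioo a b, HasDerivAt f (f' t) t) (hx : x ∈ Ioo a b) (hy : y ∈ Ioo a b) :
    ENNReal.ofReal ((f x - f y) ^ 2)
      ≤ ∫⁻ t in Ioo a b,
          (segmentKernel x y t + segmentKernel y x t) * ENNReal.ofReal (f' t ^ 2) := by
  wlog hyx : y ≤ x generalizing x y
  · simpa only [sub_sq_comm, add_comm] using this hy hx (le_of_not_ge hyx)
  have hsub : Ioo y x ⊆ Ioo a b := Ioo_subset_Ioo hy.1.le hx.2.le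
  calc ENNReal.ofReal ((f x - f y) ^ 2)
      ≤ ENNReal.ofReal (x - y) * ∫⁻ t in Ioo y x, ENNReal.ofReal (f' t ^ 2) :=
        ofReal_sub_sq_le_mul_lintegral_sq hyx fun t ht =>
          hf t ⟨hy.1.trans_le ht.1, ht.2.trans_lt hx.2⟩
    _ = ∫⁻ t in Ioo a b, segmentKernel x y t * ENNReal.ofReal (f' t ^ 2) := by
        have hK (t : ℝ) : segmentKernel x y t * ENNReal.ofReal (f' t ^ 2) = (Ioo y x).indicator
            (fun t => ENNReal.ofReal (x - y) * ENNReal.ofReal (f' t ^ 2)) t := by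
          rw [segmentKernel, indicator_mul_left]
        rw [lintegral_congr hK, lintegral_indicator measurableSet_Ioo,
          Measure.restrict_restrict measurableSet_Ioo, inter_eq_left.2 hsub,
          lintegral_const_mul' _ _ ENNReal.ofReal_ne_top]
    _ ≤ _ := by gcongr; exact le_self_add

lemma lintegral_lintegral_ofReal_sub_sq_le {f f' : ℝ → ℝ} {a b : ℝ}
    (hf : ∀ t ∈ Ioo a b, HasDerivAt f (f' t) t) :
    ∫⁻ x in Ioo a b, ∫⁻ y in Ioo a b, ENNReal.ofReal ((f x - f y) ^ 2)
      ≤ ENNReal.ofReal (b - a) *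
          ∫⁻ t in Ioo a b, ENNReal.ofReal ((t - a) * (b - t) * f' t ^ 2) := by
  -- `f'` need not be measurable, so the exchange of integrals is done with `deriv f`.
  have hderiv (t : ℝ) (ht : t ∈ Ioo a b) : HasDerivAt f (deriv f t) t :=
    (hf t ht).differentiableAt.hasDerivAt
  have hG : Measurable fun t => ENNReal.ofReal (deriv f t ^ 2) :=
    ((measurable_deriv f).pow_const 2).ennreal_ofReal
  calc ∫⁻ x in Ioo a b, ∫⁻ y in Ioo a b, ENNReal.ofReal ((f x - f y) ^ 2)
      ≤ ∫⁻ x in Ioo a b, ∫⁻ y in Ioo a b, ∫⁻ t in Ioo a b,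
          (segmentKernel x y t + segmentKernel y x t) * ENNReal.ofReal (deriv f t ^ 2) :=
        setLIntegral_mono' measurableSet_Ioo fun x hx => setLIntegral_mono' measurableSet_Ioo
          fun y hy => ofReal_sub_sq_le_lintegral_segmentKernel hderiv hx hy
    _ = ∫⁻ t in Ioo a b, ∫⁻ x in Ioo a b, ∫⁻ y in Ioo a b,
          (segmentKernel x y t + segmentKernel y x t) * ENNReal.ofReal (deriv f t ^ 2) := by
        refine lintegral_lintegral_lintegral_swap (((measurable_segmentKernel.add ?_).mul
          (hG.comp measurable_snd.snd)))
        exact measurable_segmentKernel.comp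
          (measurable_snd.fst.prodMk (measurable_fst.prodMk measurable_snd.snd))
    _ = ∫⁻ t in Ioo a b,
          ENNReal.ofReal (b - a) * ENNReal.ofReal ((t - a) * (b - t) * f' t ^ 2) := by
        refine setLIntegral_congr_fun measurableSet_Ioo fun t ht => ?_
        simp only [lintegral_mul_const' _ _ ENNReal.ofReal_ne_top]
        have hab : 0 ≤ b - a := by linarith [ht.1, ht.2]
        have hweight : 0 ≤ (b - a) * (t - a) * (b - t) :=
          mul_nonneg (mul_nonneg hab (sub_nonneg.2 ht.1.le)) (sub_nonneg.2 ht.2.le)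
        rw [lintegral_lintegral_segmentKernel_add_swap ht, (hf t ht).deriv,
          ← ENNReal.ofReal_mul hweight, ← ENNReal.ofReal_mul hab]
        congr 1
        ring
    _ = _ := lintegral_const_mul' _ _ ENNReal.ofReal_ne_top

/-- Poincaré-type inequality with optimal constant on a bounded interval. -/
theorem poincare_type_inequality (a b : ℝ) (hab : a < b) (f f' : ℝ → ℝ)
    (hderiv : ∀ y ∈ Ioo a b, HasDerivAt f (f' y) y)
    (hf_int : IntegrableOn f (Ioo a b))
    (hf'_int : IntegrableOn (fun y => (y - a) * (b - y) * |f' y| ^ 2) (Ioo a b)) :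
    ∫ y in Ioo a b, |f y - (1 / (b - a)) * ∫ z in Ioo a b, f z| ^ 2
      ≤ (1 / 2) * ∫ y in Ioo a b, (y - a) * (b - y) * |f' y| ^ 2 := by
  set m := (1 / (b - a)) * ∫ z in Ioo a b, f z
  simp_rw [sq_abs] at hf'_int ⊢
  have hweight : 0 ≤ᵐ[volume.restrict (Ioo a b)] fun y => (y - a) * (b - y) * f' y ^ 2 :=
    ae_restrict_of_forall_mem measurableSet_Ioo fun y hy =>
      mul_nonneg (mul_nonneg (sub_nonneg.2 hy.1.le) (sub_nonneg.2 hy.2.le)) (sq_nonneg _)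
  -- Otherwise the left side is the junk value `0`.
  by_cases hsq : IntegrableOn (fun y => (f y - m) ^ 2) (Ioo a b)
  swap
  · rw [integral_undef hsq]
    exact mul_nonneg one_half_pos.le (integral_nonneg_of_ae hweight)
  have hL2 : MemLp (fun y => f y - m) 2 (volume.restrict (Ioo a b)) :=
    (memLp_two_iff_integrable_sq (hf_int.aestronglyMeasurable.sub aestronglyMeasurable_const)).2 hsq
  have hmean : ∫ y in Ioo a b, (f y - m) = 0 := by
    rw [integral_sub hf_int (integrable_const m), setIntegral_const,
      Real.volume_real_Ioo_of_le hab.le, smul_eq_mul, ← mul_assoc,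
      mul_one_div_cancel (sub_pos.2 hab).ne', one_mul, sub_self]
  have hupper := lintegral_lintegral_ofReal_sub_sq_le hderiv
  have hlower := lintegral_lintegral_ofReal_sub_sq hL2
  simp only [sub_sub_sub_cancel_right, hmean, measureReal_restrict_apply_univ,
    Real.volume_real_Ioo_of_le hab.le] at hlower
  rw [hlower, ← ofReal_integral_eq_lintegral_ofReal hf'_int hweight,
    ← ENNReal.ofReal_mul (sub_nonneg.2 hab.le),
    ENNReal.ofReal_le_ofReal_iff (mul_nonneg (sub_nonneg.2 hab.le) (integral_nonneg_of_ae hweight))]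
    at hupper
  nlinarith [sub_pos.2 hab]
end

section
/- Let γ > 1 and let ρ, ρ̃ > 0 and u, ũ ∈ ℝ, and set m = ρu, m̃ = ρ̃ũ. Define the entropy flux q(r, n) := n³/(2r²) + (γ/(γ−1)) n r^{γ−1} for r > 0, the flux f(r, n) := (n, n²/r + r^γ), and the relative pressure p(ρ|ρ̃) := ρ^γ − ρ̃^γ − γρ̃^{γ−1}(ρ − ρ̃). Then q(ρ, m) − q(ρ̃, m̃) − (−ũ²/2 + γρ̃^{γ−1}/(γ−1))·(f₁(ρ,m) − f₁(ρ̃,m̃)) − ũ·(f₂(ρ,m) − f₂(ρ̃,m̃)) = (1/2)ρu(u − ũ)² + u·p(ρ|ρ̃)/(γ−1) + (ρ^γ − ρ̃^γ)(u − ũ), where f₁, f₂ denote the two components of f. -/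
/-- The relative entropy flux of the barotropic system. -/
theorem relative_entropy_flux_identity (γ : ℝ) (hγ : 1 < γ)
    (ρ ρt : ℝ) (hρ : 0 < ρ) (hρt : 0 < ρt) (u ut : ℝ) :
    ((ρ * u) ^ 3 / (2 * ρ ^ 2) + (γ / (γ - 1)) * (ρ * u) * ρ ^ (γ - 1))
      - ((ρt * ut) ^ 3 / (2 * ρt ^ 2) + (γ / (γ - 1)) * (ρt * ut) * ρt ^ (γ - 1))
      - (-(ut ^ 2) / 2 + γ * ρt ^ (γ - 1) / (γ - 1)) * ((ρ * u) - (ρt * ut))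
      - ut * (((ρ * u) ^ 2 / ρ + ρ ^ γ) - ((ρt * ut) ^ 2 / ρt + ρt ^ γ))
      = (1 / 2) * ρ * u * (u - ut) ^ 2
        + u * (ρ ^ γ - ρt ^ γ - γ * ρt ^ (γ - 1) * (ρ - ρt)) / (γ - 1)
        + (ρ ^ γ - ρt ^ γ) * (u - ut) := by
  have h1 : ρ ^ (γ - 1) = ρ ^ γ / ρ := Real.rpow_sub_one hρ.ne' γ
  have h2 : ρt ^ (γ - 1) = ρt ^ γ / ρt := Real.rpow_sub_one hρt.ne' γ
  have hg : γ - 1 ≠ 0 := by linarith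
  rw [h1, h2]
  field_simp
  ring
end

section
/- Let γ > 1, p(ρ) = ρ^γ, and 0 < r₀ < r₁. Then there exists a constant C > 0 such that for all ρ₊, ρ₋, ρ̃ ∈ [r₀, r₁] with ρ̃ ≠ ρ₊, ρ̃ ≠ ρ₋, and min(ρ₊, ρ₋) ≤ ρ̃ ≤ max(ρ₊, ρ₋), one has |(p(ρ̃) − p(ρ₋))/(ρ̃ − ρ₋) − (p(ρ̃) − p(ρ₊))/(ρ̃ − ρ₊) − (γ(γ−1)/2) ρ₊^{γ−2} (ρ₋ − ρ₊)| ≤ C |ρ₋ − ρ₊|². -/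
/-!
Subtract from `p` its second-order Taylor polynomial at `ρ₊`. The polynomial part accounts
exactly for the term `p''(ρ₊)/2 · (ρ₋ - ρ₊)`, since the divided differences of a quadratic
`c (x - ρ₊)²` differ by `c (ρ₋ - ρ₊)`. The remainder `φ` has `|φ'(y)| ≤ L |y - ρ₊|²` with `L`
a Lipschitz constant of `p''` on `[r₀, r₁]`, so by the mean value theorem each of its two
divided differences is `O(|ρ₋ - ρ₊|²)`, all points involved lying between `ρ₊` and `ρ₋`.
-/

open Set NNReal

lemma abs_slope_le_of_abs_deriv_le {f f' : ℝ → ℝ} {s : Set ℝ} (hs : Convex ℝ s) {C : ℝ}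
    (hf : ∀ x ∈ s, HasDerivWithinAt f (f' x) s x) (hC : ∀ x ∈ s, |f' x| ≤ C)
    {x y : ℝ} (hx : x ∈ s) (hy : y ∈ s) : |slope f x y| ≤ C := by
  rcases eq_or_ne x y with rfl | hxy
  · simpa using (abs_nonneg _).trans (hC x hx)
  have hmv := hs.norm_image_sub_le_of_norm_hasDerivWithin_le hf hC hx hy
  rw [slope_def_field, abs_div, div_le_iff₀ (abs_pos.mpr (sub_ne_zero.mpr hxy.symm))]
  simpa only [Real.norm_eq_abs] using hmv

lemma abs_sub_sub_deriv_mul_le_of_lipschitzOnWith {f f' : ℝ → ℝ} {s : Set ℝ} (hs : Convex ℝ s)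
    {L : ℝ≥0} (hf : ∀ x ∈ s, HasDerivWithinAt f (f' x) s x) (hL : LipschitzOnWith L f' s)
    {a x : ℝ} (ha : a ∈ s) (hx : x ∈ s) :
    |f x - f a - f' a * (x - a)| ≤ L * |x - a| ^ 2 := by
  have hsub : uIcc a x ⊆ s := hs.ordConnected.uIcc_subset ha hx
  have hg : ∀ y ∈ uIcc a x,
      HasDerivWithinAt (fun y ↦ f y - f' a * y) (f' y - f' a) (uIcc a x) y := fun y hy ↦ by
    simpa using ((hf y (hsub hy)).mono hsub).fun_sub ((hasDerivWithinAt_id y _).const_mul (f' a))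
  have hg' : ∀ y ∈ uIcc a x, ‖f' y - f' a‖ ≤ L * |x - a| := fun y hy ↦
    calc ‖f' y - f' a‖ ≤ L * |y - a| := by
          simpa only [Real.norm_eq_abs, ← Real.dist_eq] using
            hL.dist_le_mul y (hsub hy) a ha
      _ ≤ L * |x - a| := by gcongr L * ?_; exact abs_sub_left_of_mem_uIcc hy
  have hmv := (convex_uIcc a x).norm_image_sub_le_of_norm_hasDerivWithin_le hg hg'
    left_mem_uIcc right_mem_uIcc
  rw [Real.norm_eq_abs, Real.norm_eq_abs] at hmv
  calc |f x - f a - f' a * (x - a)| = |f x - f' a * x - (f a - f' a * a)| :=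
        congrArg abs (by ring)
    _ ≤ L * |x - a| * |x - a| := hmv
    _ = L * |x - a| ^ 2 := by ring

lemma slope_sub_slope_sub_half_mul_eq (f : ℝ → ℝ) (c₁ c₂ : ℝ) {a b t : ℝ}
    (hta : t ≠ a) (htb : t ≠ b) :
    slope f b t - slope f a t - c₂ / 2 * (b - a) =
      slope (fun x ↦ f x - c₁ * x - c₂ / 2 * (x - a) ^ 2) b t -
        slope (fun x ↦ f x - c₁ * x - c₂ / 2 * (x - a) ^ 2) a t := by
  have hta' : t - a ≠ 0 := sub_ne_zero.mpr hta
  have htb' : t - b ≠ 0 := sub_ne_zero.mpr htb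
  simp only [slope_def_field]
  field_simp
  ring

theorem abs_slope_sub_slope_sub_le {f f' f'' : ℝ → ℝ} {s : Set ℝ} (hs : Convex ℝ s) {L : ℝ≥0}
    (hf : ∀ x ∈ s, HasDerivWithinAt f (f' x) s x)
    (hf' : ∀ x ∈ s, HasDerivWithinAt f' (f'' x) s x) (hL : LipschitzOnWith L f'' s)
    {a b t : ℝ} (ha : a ∈ s) (hb : b ∈ s) (ht : t ∈ uIcc a b) (hta : t ≠ a) (htb : t ≠ b) :
    |slope f b t - slope f a t - f'' a / 2 * (b - a)| ≤ 2 * L * |b - a| ^ 2 := by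
  set φ : ℝ → ℝ := fun x ↦ f x - f' a * x - f'' a / 2 * (x - a) ^ 2
  have hsub : uIcc a b ⊆ s := hs.ordConnected.uIcc_subset ha hb
  have hφ : ∀ y ∈ uIcc a b,
      HasDerivWithinAt φ (f' y - f' a - f'' a * (y - a)) (uIcc a b) y := fun y hy ↦ by
    have hq : HasDerivAt (fun x ↦ f'' a / 2 * (x - a) ^ 2) (f'' a * (y - a)) y :=
      (((hasDerivAt_id' y).sub_const a).fun_pow 2).const_mul (f'' a / 2)
        |>.congr_deriv (by push_cast; ring)
    exact (((hf y (hsub hy)).mono hsub).sub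
      ((hasDerivAt_id y).const_mul (f' a)).hasDerivWithinAt).sub hq.hasDerivWithinAt
      |>.congr_deriv (by simp)
  have hφ' : ∀ y ∈ uIcc a b, |f' y - f' a - f'' a * (y - a)| ≤ L * |b - a| ^ 2 := fun y hy ↦
    calc |f' y - f' a - f'' a * (y - a)| ≤ L * |y - a| ^ 2 :=
          abs_sub_sub_deriv_mul_le_of_lipschitzOnWith hs hf' hL ha (hsub hy)
      _ ≤ L * |b - a| ^ 2 := by gcongr L * ?_ ^ 2; exact abs_sub_left_of_mem_uIcc hy
  have hslope : ∀ x ∈ uIcc a b, |slope φ x t| ≤ L * |b - a| ^ 2 := fun x hx ↦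
    abs_slope_le_of_abs_deriv_le (convex_uIcc a b) hφ hφ' hx ht
  calc |slope f b t - slope f a t - f'' a / 2 * (b - a)| = |slope φ b t - slope φ a t| :=
        congrArg abs (slope_sub_slope_sub_half_mul_eq f (f' a) (f'' a) hta htb)
    _ ≤ |slope φ b t| + |slope φ a t| := abs_sub _ _
    _ ≤ L * |b - a| ^ 2 + L * |b - a| ^ 2 :=
        add_le_add (hslope b right_mem_uIcc) (hslope a left_mem_uIcc)
    _ = 2 * L * |b - a| ^ 2 := by ring

theorem divided_difference_taylor_general (γ : ℝ)
    (r₀ r₁ : ℝ) (h₀ : 0 < r₀) :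
    ∃ C : ℝ, 0 < C ∧ ∀ ρp ρm ρt : ℝ,
      ρp ∈ Set.Icc r₀ r₁ → ρm ∈ Set.Icc r₀ r₁ → ρt ∈ Set.Icc r₀ r₁ →
      ρt ≠ ρp → ρt ≠ ρm → min ρp ρm ≤ ρt → ρt ≤ max ρp ρm →
      |(ρt ^ γ - ρm ^ γ) / (ρt - ρm) - (ρt ^ γ - ρp ^ γ) / (ρt - ρp)
          - γ * (γ - 1) / 2 * ρp ^ (γ - 2) * (ρm - ρp)|
        ≤ C * |ρm - ρp| ^ 2 := by
  have hpos : ∀ x ∈ Icc r₀ r₁, x ≠ 0 := fun x hx ↦ (h₀.trans_le hx.1).ne'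
  have hp : ∀ x ∈ Icc r₀ r₁, HasDerivWithinAt (· ^ γ) (γ * x ^ (γ - 1)) (Icc r₀ r₁) x :=
    fun x hx ↦ (Real.hasDerivAt_rpow_const (Or.inl (hpos x hx))).hasDerivWithinAt
  have hp' : ∀ x ∈ Icc r₀ r₁, HasDerivWithinAt (fun x ↦ γ * x ^ (γ - 1))
      (γ * (γ - 1) * x ^ (γ - 2)) (Icc r₀ r₁) x := fun x hx ↦
    (Real.hasDerivAt_rpow_const (Or.inl (hpos x hx))).const_mul γ
      |>.congr_deriv (by rw [show γ - 1 - 1 = γ - 2 by ring, mul_assoc]) |>.hasDerivWithinAt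
  obtain ⟨L, hL⟩ : ∃ L, LipschitzOnWith L (fun x ↦ γ * (γ - 1) * x ^ (γ - 2)) (Icc r₀ r₁) :=
    ContDiffOn.exists_lipschitzOnWith (n := 1)
      (fun x hx ↦ (contDiffAt_const.mul (Real.contDiffAt_rpow_const_of_ne (hpos x hx)))
        |>.contDiffWithinAt) one_ne_zero (convex_Icc r₀ r₁) isCompact_Icc
  refine ⟨2 * L + 1, by positivity, fun ρp ρm ρt hρp hρm _ hne_p hne_m hmin hmax ↦ ?_⟩
  calc _ = |slope (· ^ γ) ρm ρt - slope (· ^ γ) ρp ρt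
          - γ * (γ - 1) * ρp ^ (γ - 2) / 2 * (ρm - ρp)| := by
        simp only [slope_def_field]; ring_nf
    _ ≤ 2 * L * |ρm - ρp| ^ 2 :=
        abs_slope_sub_slope_sub_le (convex_Icc r₀ r₁) hp hp' hL hρp hρm ⟨hmin, hmax⟩ hne_p hne_m
    _ ≤ (2 * L + 1) * |ρm - ρp| ^ 2 := by gcongr; linarith

/-- Uniform second-order Taylor estimate for the difference of two divided
differences of the γ-law pressure at an intermediate density. -/
theorem divided_difference_taylor (γ : ℝ) (hγ : 1 < γ)
    (r₀ r₁ : ℝ) (h₀ : 0 < r₀) (h₁ : r₀ < r₁) :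
    ∃ C : ℝ, 0 < C ∧ ∀ ρp ρm ρt : ℝ,
      ρp ∈ Set.Icc r₀ r₁ → ρm ∈ Set.Icc r₀ r₁ → ρt ∈ Set.Icc r₀ r₁ →
      ρt ≠ ρp → ρt ≠ ρm → min ρp ρm ≤ ρt → ρt ≤ max ρp ρm →
      |(ρt ^ γ - ρm ^ γ) / (ρt - ρm) - (ρt ^ γ - ρp ^ γ) / (ρt - ρp)
          - γ * (γ - 1) / 2 * ρp ^ (γ - 2) * (ρm - ρp)|
        ≤ C * |ρm - ρp| ^ 2 :=
  divided_difference_taylor_general γ r₀ r₁ h₀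
end

section
/- Let γ > 1 and 0 < r₀ < r₁. Then there exists a constant C > 0 such that for all ρ, ρ̃ ∈ [r₀, r₁], all u, ũ ∈ ℝ, and all s > 0: −s·p(ρ|ρ̃)/(γ−1) + (ρ^γ − ρ̃^γ)(u − ũ) ≤ −(s/2)·γρ̃^{γ−2}·[(ρ − ρ̃) − (ρ̃/s)(u − ũ)]² + (γρ̃^γ/(2s))·(u − ũ)² + C|ρ − ρ̃|²|u − ũ| + C·s·|ρ − ρ̃|³, where p(ρ|ρ̃) := ρ^γ − ρ̃^γ − γρ̃^{γ−1}(ρ − ρ̃). -/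
/-!
With `a = ρ - ρ̃` and `v = u - ũ`, the pressure difference splits as
`ρ^γ - ρ̃^γ = p(ρ|ρ̃) + γ ρ̃^{γ-1} a`, and completing the square turns the first two terms on the
right into `-(s/2) γ ρ̃^{γ-2} a² + γ ρ̃^{γ-1} a v`. What remains are two Taylor estimates for
`t ↦ t^γ` on `[r₀, r₁]`, where all its derivatives are bounded:
`p(ρ|ρ̃) = γ(γ-1)/2 ρ̃^{γ-2} a² + O(|a|³)` turns `-s p(ρ|ρ̃)/(γ-1)` into the quadratic term, and
`p(ρ|ρ̃) = O(a²)` bounds `p(ρ|ρ̃) v`.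
-/

open Set

lemma abs_sub_le_mul_pow_succ_of_abs_deriv_le {e e' : ℝ → ℝ} {x y C : ℝ} {n : ℕ} (hC : 0 ≤ C)
    (he : ∀ t ∈ uIcc y x, HasDerivAt e (e' t) t)
    (he' : ∀ t ∈ uIcc y x, |e' t| ≤ C * |t - y| ^ n) :
    |e x - e y| ≤ C * |x - y| ^ (n + 1) := by
  have hbound : ∀ t ∈ uIcc y x, ‖e' t‖ ≤ C * |x - y| ^ n := fun t ht =>
    (he' t ht).trans <| mul_le_mul_of_nonneg_left
      (pow_le_pow_left₀ (abs_nonneg _) (abs_sub_left_of_mem_uIcc ht) n) hC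
  have := (convex_uIcc y x).norm_image_sub_le_of_norm_hasDerivWithin_le
    (fun t ht => (he t ht).hasDerivWithinAt) hbound left_mem_uIcc right_mem_uIcc
  simpa only [Real.norm_eq_abs, pow_succ, mul_assoc] using this

lemma abs_taylor_remainder_one_le {f f' f'' : ℝ → ℝ} {x y M : ℝ}
    (hf : ∀ t ∈ uIcc y x, HasDerivAt f (f' t) t)
    (hf' : ∀ t ∈ uIcc y x, HasDerivAt f' (f'' t) t)
    (hM : ∀ t ∈ uIcc y x, |f'' t| ≤ M) :
    |f x - f y - f' y * (x - y)| ≤ M * |x - y| ^ 2 := by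
  have hM0 : 0 ≤ M := (abs_nonneg _).trans (hM y left_mem_uIcc)
  have hf'_lip : ∀ t ∈ uIcc y x, |f' t - f' y| ≤ M * |t - y| ^ 1 := fun t ht =>
    abs_sub_le_mul_pow_succ_of_abs_deriv_le (n := 0) hM0
      (fun τ hτ => hf' τ (uIcc_subset_uIcc_left ht hτ))
      (fun τ hτ => by simpa using hM τ (uIcc_subset_uIcc_left ht hτ))
  have := abs_sub_le_mul_pow_succ_of_abs_deriv_le (e := fun t => f t - f' y * (t - y)) hM0
    (fun t ht => ((hf t ht).fun_sub (((hasDerivAt_id' t).sub_const y).const_mul (f' y))).congr_deriv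
      (by ring))
    hf'_lip
  convert this using 2; ring

lemma abs_taylor_remainder_two_le {f f' f'' f''' : ℝ → ℝ} {x y M : ℝ}
    (hf : ∀ t ∈ uIcc y x, HasDerivAt f (f' t) t)
    (hf' : ∀ t ∈ uIcc y x, HasDerivAt f' (f'' t) t)
    (hf'' : ∀ t ∈ uIcc y x, HasDerivAt f'' (f''' t) t)
    (hM : ∀ t ∈ uIcc y x, |f''' t| ≤ M) :
    |f x - f y - f' y * (x - y) - f'' y / 2 * (x - y) ^ 2| ≤ M * |x - y| ^ 3 := by
  have hM0 : 0 ≤ M := (abs_nonneg _).trans (hM y left_mem_uIcc)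
  have hf'_taylor : ∀ t ∈ uIcc y x, |f' t - f' y - f'' y * (t - y)| ≤ M * |t - y| ^ 2 :=
    fun t ht => abs_taylor_remainder_one_le
      (fun τ hτ => hf' τ (uIcc_subset_uIcc_left ht hτ))
      (fun τ hτ => hf'' τ (uIcc_subset_uIcc_left ht hτ))
      (fun τ hτ => hM τ (uIcc_subset_uIcc_left ht hτ))
  have := abs_sub_le_mul_pow_succ_of_abs_deriv_le
    (e := fun t => f t - f' y * (t - y) - f'' y / 2 * (t - y) ^ 2) hM0
    (fun t ht => by
      have hlin := ((hasDerivAt_id' t).sub_const y).const_mul (f' y)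
      have hsq := (((hasDerivAt_id' t).sub_const y).fun_pow 2).const_mul (f'' y / 2)
      exact (((hf t ht).fun_sub hlin).fun_sub hsq).congr_deriv (by push_cast; ring))
    hf'_taylor
  convert this using 2; ring

lemma hasDerivAt_mul_rpow (c : ℝ) {p q t : ℝ} (hpq : q + 1 = p) (ht : t ≠ 0) :
    HasDerivAt (fun t => c * t ^ p) (c * p * t ^ q) t := by
  subst hpq
  have h := (Real.hasDerivAt_rpow_const (p := q + 1) (Or.inl ht)).const_mul c
  rwa [add_sub_cancel_right, ← mul_assoc] at h

lemma abs_mul_rpow_le_of_mem_Icc (c e : ℝ) {r₀ r₁ t : ℝ} (h₀ : 0 < r₀) (ht : t ∈ Icc r₀ r₁) :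
    |c * t ^ e| ≤ |c| * max (r₀ ^ e) (r₁ ^ e) := by
  rw [abs_mul, abs_of_nonneg (Real.rpow_nonneg (h₀.le.trans ht.1) e)]
  gcongr
  rcases le_or_gt 0 e with he | he
  · exact le_max_of_le_right (Real.rpow_le_rpow (h₀.le.trans ht.1) ht.2 he)
  · exact le_max_of_le_left (Real.rpow_le_rpow_of_nonpos h₀ ht.1 he.le)

noncomputable def relPressure (γ ρ ρt : ℝ) : ℝ :=
  ρ ^ γ - ρt ^ γ - γ * ρt ^ (γ - 1) * (ρ - ρt)

section RelPressureTaylor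

variable {γ r₀ r₁ ρ ρt : ℝ} (h₀ : 0 < r₀) (hρ : ρ ∈ Icc r₀ r₁) (hρt : ρt ∈ Icc r₀ r₁)
include h₀ hρ hρt

lemma ne_zero_of_mem_uIcc_of_mem_Icc {t : ℝ} (ht : t ∈ uIcc ρt ρ) : t ≠ 0 :=
  (h₀.trans_le (uIcc_subset_Icc hρt hρ ht).1).ne'

lemma abs_relPressure_le :
    |relPressure γ ρ ρt| ≤ |γ * (γ - 1)| * max (r₀ ^ (γ - 2)) (r₁ ^ (γ - 2)) * |ρ - ρt| ^ 2 :=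
  abs_taylor_remainder_one_le
    (fun t ht =>
      Real.hasDerivAt_rpow_const (Or.inl (ne_zero_of_mem_uIcc_of_mem_Icc h₀ hρ hρt ht)))
    (fun t ht => hasDerivAt_mul_rpow γ (by ring) (ne_zero_of_mem_uIcc_of_mem_Icc h₀ hρ hρt ht))
    (fun t ht => abs_mul_rpow_le_of_mem_Icc _ _ h₀ (uIcc_subset_Icc hρt hρ ht))

lemma abs_relPressure_sub_le :
    |relPressure γ ρ ρt - γ * (γ - 1) * ρt ^ (γ - 2) / 2 * (ρ - ρt) ^ 2|
      ≤ |γ * (γ - 1) * (γ - 2)| * max (r₀ ^ (γ - 3)) (r₁ ^ (γ - 3)) * |ρ - ρt| ^ 3 :=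
  abs_taylor_remainder_two_le
    (fun t ht =>
      Real.hasDerivAt_rpow_const (Or.inl (ne_zero_of_mem_uIcc_of_mem_Icc h₀ hρ hρt ht)))
    (fun t ht => hasDerivAt_mul_rpow γ (by ring) (ne_zero_of_mem_uIcc_of_mem_Icc h₀ hρ hρt ht))
    (fun t ht =>
      hasDerivAt_mul_rpow (γ * (γ - 1)) (by ring) (ne_zero_of_mem_uIcc_of_mem_Icc h₀ hρ hρt ht))
    (fun t ht => abs_mul_rpow_le_of_mem_Icc _ _ h₀ (uIcc_subset_Icc hρt hρ ht))

end RelPressureTaylor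

lemma neg_mul_relPressure_div_le {γ ρ ρt s M : ℝ} (hγ : 1 < γ) (hs : 0 ≤ s)
    (hM : |relPressure γ ρ ρt - γ * (γ - 1) * ρt ^ (γ - 2) / 2 * (ρ - ρt) ^ 2|
      ≤ M * |ρ - ρt| ^ 3) :
    -s * relPressure γ ρ ρt / (γ - 1)
      ≤ -(s / 2) * (γ * ρt ^ (γ - 2)) * (ρ - ρt) ^ 2 + M / (γ - 1) * s * |ρ - ρt| ^ 3 := by
  have hγ1 : 0 < γ - 1 := sub_pos.2 hγ
  have h_expand : (-(s / 2) * (γ * ρt ^ (γ - 2)) * (ρ - ρt) ^ 2 + M / (γ - 1) * s * |ρ - ρt| ^ 3)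
      * (γ - 1) = -s * (γ * (γ - 1) * ρt ^ (γ - 2) / 2 * (ρ - ρt) ^ 2 - M * |ρ - ρt| ^ 3) := by
    field_simp
    ring
  rw [div_le_iff₀ hγ1, h_expand]
  linarith [mul_le_mul_of_nonneg_left (abs_le.1 hM).1 hs]

lemma rpow_complete_square {γ ρt s : ℝ} (hρt : ρt ≠ 0) (hs : s ≠ 0) (a v : ℝ) :
    -(s / 2) * (γ * ρt ^ (γ - 2)) * (a - ρt / s * v) ^ 2 + γ * ρt ^ γ / (2 * s) * v ^ 2
      = -(s / 2) * (γ * ρt ^ (γ - 2)) * a ^ 2 + γ * ρt ^ (γ - 1) * a * v := by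
  have h1 : ρt ^ (γ - 1) = ρt ^ (γ - 2) * ρt := by rw [← Real.rpow_add_one hρt]; ring_nf
  have h2 : ρt ^ γ = ρt ^ (γ - 1) * ρt := by rw [← Real.rpow_add_one hρt]; ring_nf
  rw [h2, h1]
  field_simp
  ring

theorem maximization_inequality_general (γ : ℝ) (hγ : 1 < γ)
    (r₀ r₁ : ℝ) (h₀ : 0 < r₀) :
    ∃ C : ℝ, 0 < C ∧ ∀ ρ ρt : ℝ, ρ ∈ Set.Icc r₀ r₁ → ρt ∈ Set.Icc r₀ r₁ →
      ∀ u ut s : ℝ, 0 < s →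
        -s * (ρ ^ γ - ρt ^ γ - γ * ρt ^ (γ - 1) * (ρ - ρt)) / (γ - 1)
            + (ρ ^ γ - ρt ^ γ) * (u - ut)
          ≤ -(s / 2) * (γ * ρt ^ (γ - 2)) * ((ρ - ρt) - (ρt / s) * (u - ut)) ^ 2
            + (γ * ρt ^ γ / (2 * s)) * (u - ut) ^ 2
            + C * |ρ - ρt| ^ 2 * |u - ut| + C * s * |ρ - ρt| ^ 3 := by
  set K := |γ * (γ - 1)| * max (r₀ ^ (γ - 2)) (r₁ ^ (γ - 2))
  set M := |γ * (γ - 1) * (γ - 2)| * max (r₀ ^ (γ - 3)) (r₁ ^ (γ - 3))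
  have hK : 0 ≤ K := by positivity
  have hM : 0 ≤ M / (γ - 1) := div_nonneg (by positivity) (sub_pos.2 hγ).le
  refine ⟨K + M / (γ - 1) + 1, by positivity, fun ρ ρt hρ hρt u ut s hs => ?_⟩
  have h_pressure := neg_mul_relPressure_div_le hγ hs.le (abs_relPressure_sub_le h₀ hρ hρt)
  have h_cross : relPressure γ ρ ρt * (u - ut) ≤ K * |ρ - ρt| ^ 2 * |u - ut| :=
    (le_abs_self _).trans (by rw [abs_mul]; gcongr; exact abs_relPressure_le h₀ hρ hρt)
  have h_split : ρ ^ γ - ρt ^ γ = relPressure γ ρ ρt + γ * ρt ^ (γ - 1) * (ρ - ρt) := by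
    unfold relPressure; ring
  change -s * relPressure γ ρ ρt / (γ - 1) + _ ≤ _
  rw [h_split, rpow_complete_square (h₀.trans_le hρt.1).ne' hs.ne']
  have hK_le : K * (|ρ - ρt| ^ 2 * |u - ut|) ≤ (K + M / (γ - 1) + 1) * (|ρ - ρt| ^ 2 * |u - ut|) :=
    mul_le_mul_of_nonneg_right (by linarith) (by positivity)
  have hM_le : M / (γ - 1) * (s * |ρ - ρt| ^ 3) ≤ (K + M / (γ - 1) + 1) * (s * |ρ - ρt| ^ 3) :=
    mul_le_mul_of_nonneg_right (by linarith) (by positivity)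
  linarith

/-- Pointwise maximization (completion of the square) underlying the a-contraction
estimate. -/
theorem maximization_inequality (γ : ℝ) (hγ : 1 < γ)
    (r₀ r₁ : ℝ) (h₀ : 0 < r₀) (h₁ : r₀ < r₁) :
    ∃ C : ℝ, 0 < C ∧ ∀ ρ ρt : ℝ, ρ ∈ Set.Icc r₀ r₁ → ρt ∈ Set.Icc r₀ r₁ →
      ∀ u ut s : ℝ, 0 < s →
        -s * (ρ ^ γ - ρt ^ γ - γ * ρt ^ (γ - 1) * (ρ - ρt)) / (γ - 1)
            + (ρ ^ γ - ρt ^ γ) * (u - ut)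
          ≤ -(s / 2) * (γ * ρt ^ (γ - 2)) * ((ρ - ρt) - (ρt / s) * (u - ut)) ^ 2
            + (γ * ρt ^ γ / (2 * s)) * (u - ut) ^ 2
            + C * |ρ - ρt| ^ 2 * |u - ut| + C * s * |ρ - ρt| ^ 3 :=
  maximization_inequality_general γ hγ r₀ r₁ h₀
end
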